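/- arXiv:2107.12352 — 9 statements merged into one kernel-verified Lean document; each statement's English description precedes it below -/
import Mathlib

section
/- Let G = (V, E, ℓ) be an edge-labeled directed graph, let d ∈ V, and let G' = 𝒟_d(G) = (V', E', ℓ') be the vertex duplication of d with new vertex d'. Define φ : V' → V by φ(d') = d and φ(i) = i for i ≠ d'. Then φ is a graph homomorphism from G' to G, and for every distinguishable set U ⊆ V' in G', the restriction φ|_U is injective and φ(U) is a distinguishable set in G. -/
namespace GeneDup

variable {α L : Type*}

/-- An edge-labeled directed graph: a finite vertex set `V`, a set of directed
edges `E ⊆ V × V`, and a labeling of edges (given as a total function whose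
values only matter on `E`). -/
structure LGraph (α L : Type*) where
  V : Finset α
  E : Finset (α × α)
  edge_mem : ∀ e ∈ E, e.1 ∈ V ∧ e.2 ∈ V
  lab : α → α → L

/-- `k` is a distinguisher of `i` and `j`. -/
def IsDistinguisher (G : LGraph α L) (i j k : α) : Prop :=
  ((i, k) ∈ G.E ∧ (j, k) ∈ G.E ∧ G.lab i k ≠ G.lab j k) ∨
  ((k, i) ∈ G.E ∧ (k, j) ∈ G.E ∧ G.lab k i ≠ G.lab k j)

/-- `i` and `j` are distinguishable in `G`. -/
def Distinguishable (G : LGraph α L) (i j : α) : Prop :=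
  ∃ k, IsDistinguisher G i j k

/-- `U ⊆ V` is a distinguishable set in `G`. -/
def IsDistSet (G : LGraph α L) (U : Set α) : Prop :=
  U ⊆ (G.V : Set α) ∧ ∀ i ∈ U, ∀ j ∈ U, i ≠ j → Distinguishable G i j

/-- The distinguishability of `G`: the maximum size of a distinguishable set. -/
noncomputable def dnum (G : LGraph α L) : ℕ :=
  sSup {n | ∃ U : Finset α, IsDistSet G (↑U) ∧ U.card = n}

/-- Vertex duplication of `d`, with `d'` the new (duplicate) vertex. -/
def dup [DecidableEq α] (G : LGraph α L) (d d' : α) : LGraph α L where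
  V := insert d' G.V
  E := (insert d' G.V ×ˢ insert d' G.V).filter
    (fun e => ((if e.1 = d' then d else e.1), (if e.2 = d' then d else e.2)) ∈ G.E)
  edge_mem := by
    intro e he
    exact Finset.mem_product.mp (Finset.mem_filter.mp he).1
  lab := fun i j => G.lab (if i = d' then d else i) (if j = d' then d else j)

/-- `H` is a subgraph of `G`. -/
def IsSubgraph (H G : LGraph α L) : Prop :=
  H.V ⊆ G.V ∧ H.E ⊆ G.E ∧ ∀ e ∈ H.E, H.lab e.1 e.2 = G.lab e.1 e.2

/-- A graph homomorphism from `G'` to `G`. -/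
def IsHom (G' G : LGraph α L) (Φ : α → α) : Prop :=
  (∀ v ∈ G'.V, Φ v ∈ G.V) ∧
  ∀ i j, (i, j) ∈ G'.E → (Φ i, Φ j) ∈ G.E ∧ G'.lab i j = G.lab (Φ i) (Φ j)

/-- One evolutionary step: passing to a subgraph, or duplicating a vertex. -/
def EvolStep [DecidableEq α] (G H : LGraph α L) : Prop :=
  IsSubgraph H G ∨ ∃ d d', d ∈ G.V ∧ d' ∉ G.V ∧ H = dup G d d'

/-- `G` is an ancestor of `G'`. -/
def Ancestor [DecidableEq α] (G G' : LGraph α L) : Prop :=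
  Relation.ReflTransGen EvolStep G G'

/-- the map `φ` sending `d'` to `d` and fixing everything else is a
graph homomorphism from `𝒟_d(G)` to `G`, is injective on every distinguishable set
of `𝒟_d(G)`, and maps distinguishable sets to distinguishable sets. -/
theorem stmt1 [DecidableEq α] (G : LGraph α L) (d d' : α)
    (hd : d ∈ G.V) (hd' : d' ∉ G.V)
    (φ : α → α) (hφ : ∀ i, φ i = if i = d' then d else i) :
    IsHom (dup G d d') G φ ∧
      ∀ U : Set α, IsDistSet (dup G d d') U →
        Set.InjOn φ U ∧ IsDistSet G (φ '' U) := by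
  have hφd' : φ d' = d := by rw [hφ]; simp
  have hφne : ∀ i, i ≠ d' → φ i = i := fun i h => by rw [hφ]; simp [h]
  have hlab : ∀ i j, (dup G d d').lab i j = G.lab (φ i) (φ j) := by
    intro i j; simp [dup, hφ]
  have hE : ∀ i j, (i, j) ∈ (dup G d d').E ↔
      (i ∈ insert d' G.V ∧ j ∈ insert d' G.V) ∧ (φ i, φ j) ∈ G.E := by
    intro i j
    simp [dup, Finset.mem_filter, Finset.mem_product, hφ]
  have hV : ∀ v ∈ (dup G d d').V, φ v ∈ G.V := by
    intro v hv
    simp only [dup, Finset.mem_insert] at hv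
    rcases hv with rfl | hv
    · rw [hφd']; exact hd
    · rw [hφne v (fun h => hd' (h ▸ hv))]; exact hv
  have hhom : IsHom (dup G d d') G φ := by
    refine ⟨hV, fun i j hij => ?_⟩
    rw [hE] at hij
    exact ⟨hij.2, hlab i j⟩
  refine ⟨hhom, fun U hU => ?_⟩
  have hkey : ∀ i j, φ i = φ j → ¬ Distinguishable (dup G d d') i j := by
    rintro i j hij ⟨k, hk⟩
    rcases hk with ⟨h1, h2, h3⟩ | ⟨h1, h2, h3⟩
    · exact h3 (by rw [hlab, hlab, hij])
    · exact h3 (by rw [hlab, hlab, hij])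
  have hinj : Set.InjOn φ U := by
    intro a ha b hb hab
    by_contra hne
    exact hkey a b hab (hU.2 a ha b hb hne)
  refine ⟨hinj, ?_, ?_⟩
  · rintro _ ⟨a, ha, rfl⟩
    exact hV a (hU.1 ha)
  · rintro _ ⟨a, ha, rfl⟩ _ ⟨b, hb, rfl⟩ hne
    have hab : a ≠ b := fun h => hne (h ▸ rfl)
    obtain ⟨k, hk⟩ := hU.2 a ha b hb hab
    refine ⟨φ k, ?_⟩
    rcases hk with ⟨h1, h2, h3⟩ | ⟨h1, h2, h3⟩
    · exact Or.inl ⟨(hhom.2 a k h1).1, (hhom.2 b k h2).1, by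
        rw [← (hhom.2 a k h1).2, ← (hhom.2 b k h2).2]; exact h3⟩
    · exact Or.inr ⟨(hhom.2 k a h1).1, (hhom.2 k b h2).1, by
        rw [← (hhom.2 k a h1).2, ← (hhom.2 k b h2).2]; exact h3⟩

end GeneDup
end

section
/- Let G = (V, E, ℓ) be an edge-labeled directed graph that is an ancestor of G' = (V', E', ℓ'). Then there exists a graph homomorphism Φ : V' → V such that for every distinguishable set U ⊆ V' in G', the restriction Φ|_U is injective and Φ(U) is a distinguishable set in G. -/
namespace GeneDup

variable {α L : Type*}

lemma step_good [DecidableEq α] {G H : LGraph α L} (h : EvolStep G H) :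
    ∃ Φ : α → α, IsHom H G Φ ∧
      ∀ U : Set α, IsDistSet H U → Set.InjOn Φ U ∧ IsDistSet G (Φ '' U) := by
  rcases h with hs | ⟨d, d', hd, hd', rfl⟩
  · -- subgraph case: identity map
    refine ⟨id, ⟨fun v hv => hs.1 hv, fun i j hij => ⟨hs.2.1 hij, hs.2.2 (i, j) hij⟩⟩, ?_⟩
    intro U hU
    refine ⟨Set.injOn_id U, ?_, ?_⟩
    · rw [Set.image_id]
      exact hU.1.trans (by exact_mod_cast hs.1)
    · rw [Set.image_id]
      intro i hi j hj hij
      obtain ⟨k, hk⟩ := hU.2 i hi j hj hij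
      rcases hk with ⟨h1, h2, h3⟩ | ⟨h1, h2, h3⟩
      · exact ⟨k, Or.inl ⟨hs.2.1 h1, hs.2.1 h2, by
          rw [← hs.2.2 (i, k) h1, ← hs.2.2 (j, k) h2]; exact h3⟩⟩
      · exact ⟨k, Or.inr ⟨hs.2.1 h1, hs.2.1 h2, by
          rw [← hs.2.2 (k, i) h1, ← hs.2.2 (k, j) h2]; exact h3⟩⟩
  · -- duplication case
    set Φ : α → α := fun v => if v = d' then d else v with hΦ
    have hne : d ≠ d' := fun hdd => hd' (hdd ▸ hd)
    have hΦd' : Φ d' = d := by simp [hΦ]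
    have hΦV : ∀ v ∈ (dup G d d').V, Φ v ∈ G.V := by
      intro v hv
      rcases Finset.mem_insert.mp hv with rfl | hv
      · simpa [hΦ]
      · by_cases hvd : v = d'
        · simpa [hΦ, hvd]
        · simpa [hΦ, hvd]
    have hE : ∀ i j, (i, j) ∈ (dup G d d').E →
        (Φ i, Φ j) ∈ G.E ∧ (dup G d d').lab i j = G.lab (Φ i) (Φ j) := by
      intro i j hij
      have := (Finset.mem_filter.mp hij).2
      exact ⟨this, rfl⟩
    -- d and d' are indistinguishable in dup G d d'
    have hindist : ¬ Distinguishable (dup G d d') d d' := by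
      rintro ⟨k, hk⟩
      rcases hk with ⟨_, _, h3⟩ | ⟨_, _, h3⟩
      · exact h3 (by simp [dup, hne])
      · exact h3 (by simp [dup, hne])
    refine ⟨Φ, ⟨hΦV, hE⟩, ?_⟩
    intro U hU
    have hinj : Set.InjOn Φ U := by
      intro a ha b hb hab
      by_contra hne2
      -- a ≠ b but Φ a = Φ b forces {a,b} = {d,d'}
      by_cases had : a = d'
      · by_cases hbd : b = d'
        · exact hne2 (had.trans hbd.symm)
        · have hbd2 : b = d := by simpa [hΦ, had, hbd] using hab.symm
          subst had hbd2
          exact hindist (hU.2 b hb a ha hne)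
      · by_cases hbd : b = d'
        · have had2 : a = d := by simpa [hΦ, had, hbd] using hab
          subst hbd had2
          exact hindist (hU.2 a ha b hb hne)
        · exact hne2 (by simpa [hΦ, had, hbd] using hab)
    refine ⟨hinj, ?_, ?_⟩
    · rintro _ ⟨v, hv, rfl⟩
      exact hΦV v (hU.1 hv)
    · rintro _ ⟨i, hi, rfl⟩ _ ⟨j, hj, rfl⟩ hij
      have hij' : i ≠ j := fun e => hij (e ▸ rfl)
      obtain ⟨k, hk⟩ := hU.2 i hi j hj hij'
      rcases hk with ⟨h1, h2, h3⟩ | ⟨h1, h2, h3⟩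
      · exact ⟨Φ k, Or.inl ⟨(hE i k h1).1, (hE j k h2).1, by
          rw [← (hE i k h1).2, ← (hE j k h2).2]; exact h3⟩⟩
      · exact ⟨Φ k, Or.inr ⟨(hE k i h1).1, (hE k j h2).1, by
          rw [← (hE k i h1).2, ← (hE k j h2).2]; exact h3⟩⟩

/-- if `G` is an ancestor of `G'`, there is a graph homomorphism
`Φ : V' → V` which is injective on every distinguishable set of `G'` and maps
distinguishable sets of `G'` to distinguishable sets of `G`. -/
theorem stmt2 [DecidableEq α] (G G' : LGraph α L) (h : Ancestor G G') :
    ∃ Φ : α → α, IsHom G' G Φ ∧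
      ∀ U : Set α, IsDistSet G' U → Set.InjOn Φ U ∧ IsDistSet G (Φ '' U) := by
  induction h with
  | refl =>
      exact ⟨id, ⟨fun v hv => hv, fun i j hij => ⟨hij, rfl⟩⟩,
        fun U hU => ⟨Set.injOn_id U, by simpa using hU⟩⟩
  | tail hab hbc ih =>
      obtain ⟨Φ, hΦ, hΦU⟩ := ih
      obtain ⟨Ψ, hΨ, hΨU⟩ := step_good hbc
      refine ⟨Φ ∘ Ψ, ⟨fun v hv => hΦ.1 _ (hΨ.1 v hv),
        fun i j hij => ⟨(hΦ.2 _ _ (hΨ.2 i j hij).1).1,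
          (hΨ.2 i j hij).2.trans (hΦ.2 _ _ (hΨ.2 i j hij).1).2⟩⟩, ?_⟩
      intro U hU
      obtain ⟨hinj1, hdist1⟩ := hΨU U hU
      obtain ⟨hinj2, hdist2⟩ := hΦU (Ψ '' U) hdist1
      exact ⟨hinj2.comp hinj1 (Set.mapsTo_image Ψ U), by
        rw [Set.image_comp]; exact hdist2⟩

end GeneDup
end

section
/- Let G = (V, E, ℓ) be an edge-labeled directed graph that is an ancestor of G' = (V', E', ℓ'). Then every distinguished subgraph of G' is isomorphic to a subgraph of G; that is, if H is a subgraph of G' whose vertex set is a distinguishable set in G', then there exists an injective graph homomorphism from H into G (so H is isomorphic to its image, a subgraph of G). -/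
namespace GeneDup

variable {α L : Type*}

/-- A "good" homomorphism: a hom that is injective on distinguishable sets and
maps distinguishable sets to distinguishable sets. -/
def GoodHom (G' G : LGraph α L) (Φ : α → α) : Prop :=
  IsHom G' G Φ ∧ ∀ U : Set α, IsDistSet G' U → Set.InjOn Φ U ∧ IsDistSet G (Φ '' U)

lemma goodHom_id_of_subgraph (H G : LGraph α L) (hs : IsSubgraph H G) :
    GoodHom H G id := by
  obtain ⟨hV, hE, hlab⟩ := hs
  constructor
  · exact ⟨fun v hv => hV hv, fun i j hij => ⟨hE hij, hlab (i, j) hij⟩⟩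
  · intro U hU
    refine ⟨Set.injOn_id U, ?_⟩
    rw [Set.image_id]
    refine ⟨fun x hx => hV (hU.1 hx), fun i hi j hj hne => ?_⟩
    obtain ⟨k, hk⟩ := hU.2 i hi j hj hne
    rcases hk with ⟨h1, h2, h3⟩ | ⟨h1, h2, h3⟩
    · exact ⟨k, Or.inl ⟨hE h1, hE h2,
        by rw [← hlab (i, k) h1, ← hlab (j, k) h2]; exact h3⟩⟩
    · exact ⟨k, Or.inr ⟨hE h1, hE h2,
        by rw [← hlab (k, i) h1, ← hlab (k, j) h2]; exact h3⟩⟩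

lemma goodHom_dup [DecidableEq α] (G : LGraph α L) (d d' : α)
    (hd : d ∈ G.V) (hd' : d' ∉ G.V) :
    GoodHom (dup G d d') G (fun v => if v = d' then d else v) := by
  have hdd' : d ≠ d' := fun h => hd' (h ▸ hd)
  have hhom : IsHom (dup G d d') G (fun v => if v = d' then d else v) := by
    constructor
    · intro v hv
      simp only [dup, Finset.mem_insert] at hv
      rcases hv with rfl | hv
      · simpa using hd
      · simp only [if_neg (fun h : v = d' => hd' (h ▸ hv))]; exact hv
    · intro i j hij
      simp only [dup, Finset.mem_filter] at hij
      exact ⟨hij.2, rfl⟩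
  refine ⟨hhom, fun U hU => ?_⟩
  -- d and d' are not distinguishable in dup G
  have hnd : ¬ Distinguishable (dup G d d') d d' := by
    rintro ⟨k, hk⟩
    rcases hk with ⟨-, -, h3⟩ | ⟨-, -, h3⟩
    · exact h3 (by simp [dup, hdd', if_neg hdd'])
    · exact h3 (by simp [dup, hdd', if_neg hdd'])
  have hinj : Set.InjOn (fun v => if v = d' then d else v) U := by
    intro i hi j hj hij
    by_contra hne
    simp only at hij
    have hdij : Distinguishable (dup G d d') i j := hU.2 i hi j hj hne
    -- from Φ i = Φ j and i ≠ j, one of i,j is d' and the other is d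
    by_cases h1 : i = d'
    · by_cases h2 : j = d'
      · exact hne (h1.trans h2.symm)
      · subst h1
        rw [if_pos rfl, if_neg h2] at hij
        subst hij
        obtain ⟨k, hk⟩ := hdij
        exact hnd ⟨k, by rcases hk with ⟨a, b, c⟩ | ⟨a, b, c⟩
                         exacts [Or.inl ⟨b, a, c.symm⟩, Or.inr ⟨b, a, c.symm⟩]⟩
    · by_cases h2 : j = d'
      · subst h2
        rw [if_neg h1, if_pos rfl] at hij
        subst hij
        exact hnd hdij
      · rw [if_neg h1, if_neg h2] at hij
        exact hne hij
  refine ⟨hinj, ?_⟩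
  constructor
  · rintro x ⟨i, hi, rfl⟩
    exact hhom.1 i (hU.1 hi)
  · rintro x ⟨i, hi, rfl⟩ y ⟨j, hj, rfl⟩ hne
    have hne' : i ≠ j := fun h => hne (by rw [h])
    obtain ⟨k, hk⟩ := hU.2 i hi j hj hne'
    rcases hk with ⟨h1, h2, h3⟩ | ⟨h1, h2, h3⟩
    · exact ⟨if k = d' then d else k, Or.inl ⟨(hhom.2 i k h1).1, (hhom.2 j k h2).1,
        by rw [← (hhom.2 i k h1).2, ← (hhom.2 j k h2).2]; exact h3⟩⟩
    · exact ⟨if k = d' then d else k, Or.inr ⟨(hhom.2 k i h1).1, (hhom.2 k j h2).1,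
        by rw [← (hhom.2 k i h1).2, ← (hhom.2 k j h2).2]; exact h3⟩⟩

lemma goodHom_comp {G₁ G₂ G₃ : LGraph α L} {Φ₁ Φ₂ : α → α}
    (h₁ : GoodHom G₂ G₁ Φ₁) (h₂ : GoodHom G₃ G₂ Φ₂) :
    GoodHom G₃ G₁ (Φ₁ ∘ Φ₂) := by
  refine ⟨⟨fun v hv => h₁.1.1 _ (h₂.1.1 v hv), fun i j hij => ?_⟩, fun U hU => ?_⟩
  · obtain ⟨he, hl⟩ := h₂.1.2 i j hij
    obtain ⟨he', hl'⟩ := h₁.1.2 _ _ he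
    exact ⟨he', hl.trans hl'⟩
  · obtain ⟨hinj₂, hdist₂⟩ := h₂.2 U hU
    obtain ⟨hinj₁, hdist₁⟩ := h₁.2 _ hdist₂
    refine ⟨fun i hi j hj hij => hinj₂ hi hj
      (hinj₁ ⟨i, hi, rfl⟩ ⟨j, hj, rfl⟩ hij), ?_⟩
    rw [Set.image_comp]; exact hdist₁

lemma ancestor_goodHom [DecidableEq α] {G G' : LGraph α L} (h : Ancestor G G') :
    ∃ Φ : α → α, GoodHom G' G Φ := by
  induction h with
  | refl =>
    exact ⟨id, goodHom_id_of_subgraph G G ⟨le_refl _, le_refl _, fun _ _ => rfl⟩⟩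
  | tail _ hstep ih =>
    obtain ⟨Φ₁, hΦ₁⟩ := ih
    rcases hstep with hs | ⟨d, d', hd, hd', rfl⟩
    · exact ⟨Φ₁ ∘ id, goodHom_comp hΦ₁ (goodHom_id_of_subgraph _ _ hs)⟩
    · exact ⟨Φ₁ ∘ _, goodHom_comp hΦ₁ (goodHom_dup _ d d' hd hd')⟩

/-- if `G` is an ancestor of `G'`, then every distinguished subgraph `H`
of `G'` embeds into `G` by an injective graph homomorphism (so `H` is isomorphic to a
subgraph of `G`). -/
theorem stmt3 [DecidableEq α] (G G' H : LGraph α L) (h : Ancestor G G')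
    (hH : IsSubgraph H G') (hdist : IsDistSet G' (↑H.V)) :
    ∃ Φ : α → α, IsHom H G Φ ∧ Set.InjOn Φ (↑H.V) := by
  obtain ⟨Φ, hΦhom, hΦgood⟩ := ancestor_goodHom h
  refine ⟨Φ, ⟨fun v hv => hΦhom.1 v (hH.1 hv), fun i j hij => ?_⟩,
    (hΦgood _ hdist).1⟩
  obtain ⟨he, hl⟩ := hΦhom.2 i j (hH.2.1 hij)
  exact ⟨he, (hH.2.2 (i, j) hij).trans hl⟩

end GeneDup
end

section
/- Let G = (V, E, ℓ) be an edge-labeled directed graph that is an ancestor of G' = (V', E', ℓ'). Then the distinguishability of G is at least that of G': 𝙳(G) ≥ 𝙳(G'). -/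
namespace GeneDup

variable {α L : Type*}

lemma dnum_set_nonempty (G : LGraph α L) :
    {n | ∃ U : Finset α, IsDistSet G (↑U) ∧ U.card = n}.Nonempty :=
  ⟨0, ∅, ⟨by simp, by simp⟩, rfl⟩

lemma dnum_set_bdd (G : LGraph α L) :
    BddAbove {n | ∃ U : Finset α, IsDistSet G (↑U) ∧ U.card = n} := by
  refine ⟨G.V.card, fun n hn => ?_⟩
  obtain ⟨U, ⟨hsub, -⟩, rfl⟩ := hn
  exact Finset.card_le_card (Finset.coe_subset.mp hsub)

lemma dnum_le_dnum (G H : LGraph α L)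
    (h : ∀ U : Finset α, IsDistSet H (↑U) →
      ∃ U' : Finset α, IsDistSet G (↑U') ∧ U'.card = U.card) :
    dnum H ≤ dnum G := by
  apply csSup_le_csSup (dnum_set_bdd G) (dnum_set_nonempty H)
  rintro n ⟨U, hU, rfl⟩
  obtain ⟨U', hU', hc⟩ := h U hU
  exact ⟨U', hU', hc⟩

lemma step_le [DecidableEq α] (G H : LGraph α L) (h : EvolStep G H) :
    dnum H ≤ dnum G := by
  apply dnum_le_dnum
  intro U hU
  rcases h with hsub | ⟨d, d', hd, hd', rfl⟩
  · refine ⟨U, ⟨fun x hx => hsub.1 (hU.1 hx), ?_⟩, rfl⟩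
    intro i hi j hj hij
    obtain ⟨k, hk⟩ := hU.2 i hi j hj hij
    rcases hk with ⟨h1, h2, h3⟩ | ⟨h1, h2, h3⟩
    · exact ⟨k, Or.inl ⟨hsub.2.1 h1, hsub.2.1 h2,
        by rw [← hsub.2.2 (i, k) h1, ← hsub.2.2 (j, k) h2]; exact h3⟩⟩
    · exact ⟨k, Or.inr ⟨hsub.2.1 h1, hsub.2.1 h2,
        by rw [← hsub.2.2 (k, i) h1, ← hsub.2.2 (k, j) h2]; exact h3⟩⟩
  · -- duplication case
    set Φ : α → α := fun i => if i = d' then d else i with hΦ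
    have hEdge : ∀ i j, (i, j) ∈ (dup G d d').E → (Φ i, Φ j) ∈ G.E := by
      intro i j hij
      exact (Finset.mem_filter.mp hij).2
    have hLab : ∀ i j, (dup G d d').lab i j = G.lab (Φ i) (Φ j) := fun i j => rfl
    -- d and d' are never distinguishable in dup G d d'
    have hne : d ≠ d' := fun hdd => hd' (hdd ▸ hd)
    have hind : ¬ Distinguishable (dup G d d') d d' := by
      rintro ⟨k, hk⟩
      have e1 : Φ d = d := by simp [hΦ, hne]
      have e2 : Φ d' = d := by simp [hΦ]
      rcases hk with ⟨-, -, h3⟩ | ⟨-, -, h3⟩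
      · exact h3 (by rw [hLab, hLab, e1, e2])
      · exact h3 (by rw [hLab, hLab, e1, e2])
    have hind' : ¬ Distinguishable (dup G d d') d' d := by
      rintro ⟨k, hk⟩
      refine hind ⟨k, ?_⟩
      rcases hk with ⟨h1, h2, h3⟩ | ⟨h1, h2, h3⟩
      · exact Or.inl ⟨h2, h1, h3.symm⟩
      · exact Or.inr ⟨h2, h1, h3.symm⟩
    have hinj : Set.InjOn Φ (↑U) := by
      intro a ha b hb hab
      by_contra hne'
      simp only [hΦ] at hab
      split_ifs at hab with h1 h2 h2
      · exact hne' (h1.trans h2.symm)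
      · subst h1; subst hab; exact hind' (hU.2 _ ha _ hb hne')
      · subst h2; subst hab; exact hind (hU.2 _ ha _ hb hne')
      · exact hne' hab
    refine ⟨U.image Φ, ⟨?_, ?_⟩, Finset.card_image_of_injOn hinj⟩
    · intro x hx
      simp only [Finset.coe_image, Set.mem_image] at hx
      obtain ⟨a, ha, rfl⟩ := hx
      have haV : a ∈ insert d' G.V := hU.1 ha
      simp only [hΦ]
      split_ifs with h1
      · exact hd
      · rcases Finset.mem_insert.mp haV with h | h
        · exact absurd h h1
        · exact h
    · intro i hi j hj hij
      simp only [Finset.coe_image, Set.mem_image] at hi hj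
      obtain ⟨a, ha, rfl⟩ := hi
      obtain ⟨b, hb, rfl⟩ := hj
      have hab : a ≠ b := fun h => hij (h ▸ rfl)
      obtain ⟨k, hk⟩ := hU.2 a ha b hb hab
      rcases hk with ⟨h1, h2, h3⟩ | ⟨h1, h2, h3⟩
      · refine ⟨Φ k, Or.inl ⟨hEdge _ _ h1, hEdge _ _ h2, ?_⟩⟩
        rw [← hLab, ← hLab]; exact h3
      · refine ⟨Φ k, Or.inr ⟨hEdge _ _ h1, hEdge _ _ h2, ?_⟩⟩
        rw [← hLab, ← hLab]; exact h3

/-- if `G` is an ancestor of `G'` then `𝙳(G) ≥ 𝙳(G')`. -/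
theorem stmt4 [DecidableEq α] (G G' : LGraph α L) (h : Ancestor G G') :
    dnum G' ≤ dnum G := by
  induction h with
  | refl => exact le_rfl
  | tail hstep hlast ih => exact le_trans (step_le _ _ hlast) ih

end GeneDup
end

section
/- Let G = (V, E, ℓ) be an edge-labeled directed graph and d ∈ V. Then vertex duplication preserves distinguishability exactly: 𝙳(𝒟_d(G)) = 𝙳(G). -/
namespace GeneDup

variable {α L : Type*}

/-- vertex duplication preserves distinguishability exactly:
`𝙳(𝒟_d(G)) = 𝙳(G)`. -/
theorem stmt7 [DecidableEq α] (G : LGraph α L) (d d' : α)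
    (hd : d ∈ G.V) (hd' : d' ∉ G.V) :
    dnum (dup G d d') = dnum G := by
  classical
  have hsets : {n | ∃ U : Finset α, IsDistSet (dup G d d') (↑U) ∧ U.card = n}
      = {n | ∃ U : Finset α, IsDistSet G (↑U) ∧ U.card = n} := by
    ext n
    constructor
    · rintro ⟨U, ⟨hsub, hdist⟩, rfl⟩
      have hinj : Set.InjOn (fun v => if v = d' then d else v) (↑U) := by
        intro i hi j hj hij
        by_contra hne
        obtain ⟨k, hk⟩ := hdist i hi j hj hne
        have h1 : ∀ k, (dup G d d').lab i k = (dup G d d').lab j k := by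
          intro k
          show G.lab (if i = d' then d else i) _ = G.lab (if j = d' then d else j) _
          simp only at hij
          rw [hij]
        have h2 : ∀ k, (dup G d d').lab k i = (dup G d d').lab k j := by
          intro k
          show G.lab _ (if i = d' then d else i) = G.lab _ (if j = d' then d else j)
          simp only at hij
          rw [hij]
        rcases hk with ⟨_, _, hl⟩ | ⟨_, _, hl⟩
        · exact hl (h1 k)
        · exact hl (h2 k)
      refine ⟨U.image (fun v => if v = d' then d else v), ⟨?_, ?_⟩, ?_⟩
      · intro x hx
        simp only [Finset.coe_image, Set.mem_image, Finset.mem_coe] at hx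
        obtain ⟨i, hi, rfl⟩ := hx
        have := hsub hi
        simp only [dup, Finset.coe_insert, Set.mem_insert_iff, Finset.mem_coe] at this
        rcases this with rfl | h
        · simpa using hd
        · have hne : i ≠ d' := fun h' => hd' (h' ▸ h)
          simpa [hne] using h
      · intro x hx y hy hxy
        simp only [Finset.coe_image, Set.mem_image, Finset.mem_coe] at hx hy
        obtain ⟨i, hi, rfl⟩ := hx
        obtain ⟨j, hj, rfl⟩ := hy
        have hij : i ≠ j := fun h => hxy (by rw [h])
        obtain ⟨k, hk⟩ := hdist i hi j hj hij
        have memE : ∀ a b, (a, b) ∈ (dup G d d').E →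
            ((if a = d' then d else a), (if b = d' then d else b)) ∈ G.E := by
          intro a b hab
          simp only [dup, Finset.mem_filter] at hab
          exact hab.2
        refine ⟨if k = d' then d else k, ?_⟩
        rcases hk with ⟨e1, e2, hl⟩ | ⟨e1, e2, hl⟩
        · exact Or.inl ⟨memE _ _ e1, memE _ _ e2, hl⟩
        · exact Or.inr ⟨memE _ _ e1, memE _ _ e2, hl⟩
      · exact Finset.card_image_of_injOn hinj
    · rintro ⟨U, ⟨hsub, hdist⟩, rfl⟩
      refine ⟨U, ⟨?_, ?_⟩, rfl⟩
      · intro x hx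
        simp only [dup, Finset.coe_insert, Set.mem_insert_iff, Finset.mem_coe]
        exact Or.inr (hsub hx)
      · intro i hi j hj hij
        obtain ⟨k, hk⟩ := hdist i hi j hj hij
        have aux : ∀ a b, (a, b) ∈ G.E → (a, b) ∈ (dup G d d').E ∧
            (dup G d d').lab a b = G.lab a b := by
          intro a b hab
          obtain ⟨ha, hb⟩ := G.edge_mem _ hab
          have ha' : a ≠ d' := fun h => hd' (h ▸ ha)
          have hb' : b ≠ d' := fun h => hd' (h ▸ hb)
          constructor
          · simp only [dup, Finset.mem_filter, Finset.mem_product, Finset.mem_insert]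
            exact ⟨⟨Or.inr ha, Or.inr hb⟩, by simp [ha', hb', hab]⟩
          · show G.lab (if a = d' then d else a) (if b = d' then d else b) = _
            simp [ha', hb']
        rcases hk with ⟨e1, e2, hl⟩ | ⟨e1, e2, hl⟩
        · obtain ⟨m1, l1⟩ := aux _ _ e1
          obtain ⟨m2, l2⟩ := aux _ _ e2
          exact ⟨k, Or.inl ⟨m1, m2, by rw [l1, l2]; exact hl⟩⟩
        · obtain ⟨m1, l1⟩ := aux _ _ e1
          obtain ⟨m2, l2⟩ := aux _ _ e2
          exact ⟨k, Or.inr ⟨m1, m2, by rw [l1, l2]; exact hl⟩⟩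
  unfold dnum
  rw [hsets]

end GeneDup
end

section
/- Let G = (V, E, ℓ) be an edge-labeled directed graph with finite label set L, let d ∈ V, and let G' = (V', E', ℓ') = 𝒟_d(G). Fix a probability function p : L → [0,1] with Σ_{a∈L} p(a) = 1 and with at least two labels a ≠ b satisfying p(a) > 0 and p(b) > 0. For a labeling ℓ_r : E → L let G_r = (V, E, ℓ_r) and P(G_r) = Π_{e∈E} p(ℓ_r(e)); likewise for labelings ℓ'_s : E' → L let G'_s = (V', E', ℓ'_s) and P(G'_s) = Π_{e∈E'} p(ℓ'_s(e)). Then Σ_r P(G_r) 𝙳(G_r) ≤ Σ_s P(G'_s) 𝙳(G'_s), where the sums range over all labelings of E and of E' respectively; i.e., the fixed-distribution expected distinguishability does not decrease under vertex duplication. -/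
namespace GeneDup

variable {α L : Type*}

/-- The graph `G` with its edges relabeled according to `f`. -/
def relabel [DecidableEq α] (G : LGraph α L) (f : {e // e ∈ G.E} → L) : LGraph α L where
  V := G.V
  E := G.E
  edge_mem := G.edge_mem
  lab := fun i j => if h : (i, j) ∈ G.E then f ⟨(i, j), h⟩ else G.lab i j

/-- The probability `P(G_f) = ∏_{e ∈ E} p(f(e))` of the labeling `f` of the edges
of `G`, where each edge is labeled independently with distribution `p`. -/
noncomputable def labProb (p : L → ℝ) (G : LGraph α L) (f : {e // e ∈ G.E} → L) : ℝ :=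
  ∏ e, p (f e)

lemma isDistSet_empty (G : LGraph α L) : IsDistSet G (↑(∅ : Finset α)) := by
  constructor
  · simp
  · intro i hi
    simp at hi

lemma dnum_le_dnum_s13 (H K : LGraph α L) (hV : H.V ⊆ K.V) (hE : H.E ⊆ K.E)
    (hl : ∀ i j, (i, j) ∈ H.E → H.lab i j = K.lab i j) : dnum H ≤ dnum K := by
  apply csSup_le_csSup
  · refine ⟨K.V.card, fun n hn => ?_⟩
    obtain ⟨U, hU, rfl⟩ := hn
    exact Finset.card_le_card (Finset.coe_subset.mp hU.1)
  · exact ⟨0, ∅, isDistSet_empty H, by simp⟩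
  · rintro n ⟨U, ⟨hUV, hdist⟩, rfl⟩
    refine ⟨U, ⟨hUV.trans (Finset.coe_subset.mpr hV), ?_⟩, rfl⟩
    intro i hi j hj hij
    obtain ⟨k, hk⟩ := hdist i hi j hj hij
    refine ⟨k, ?_⟩
    rcases hk with ⟨h1, h2, h3⟩ | ⟨h1, h2, h3⟩
    · exact Or.inl ⟨hE h1, hE h2, by rw [← hl _ _ h1, ← hl _ _ h2]; exact h3⟩
    · exact Or.inr ⟨hE h1, hE h2, by rw [← hl _ _ h1, ← hl _ _ h2]; exact h3⟩

lemma dupE_sub [DecidableEq α] (G : LGraph α L) (d d' : α) (hd' : d' ∉ G.V) :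
    G.E ⊆ (dup G d d').E := by
  intro e he
  obtain ⟨h1, h2⟩ := G.edge_mem e he
  have n1 : e.1 ≠ d' := fun h => hd' (h ▸ h1)
  have n2 : e.2 ≠ d' := fun h => hd' (h ▸ h2)
  simp only [dup, Finset.mem_filter, Finset.mem_product, Finset.mem_insert,
    if_neg n1, if_neg n2]
  exact ⟨⟨Or.inr h1, Or.inr h2⟩, by simpa using he⟩

/-- the fixed-distribution expected distinguishability does not decrease
under vertex duplication: with each edge labeled i.i.d. according to `p`,
`∑_r P(G_r) 𝙳(G_r) ≤ ∑_s P(G'_s) 𝙳(G'_s)` where `G' = 𝒟_d(G)`. -/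
theorem stmt13 [DecidableEq α] [Fintype L] (G : LGraph α L) (d d' : α)
    (hd : d ∈ G.V) (hd' : d' ∉ G.V)
    (p : L → ℝ) (hp0 : ∀ a, 0 ≤ p a) (hp1 : ∑ a, p a = 1)
    (a b : L) (hab : a ≠ b) (hpa : 0 < p a) (hpb : 0 < p b) :
    ∑ f : {e // e ∈ G.E} → L, labProb p G f * (dnum (relabel G f) : ℝ) ≤
      ∑ g : {e // e ∈ (dup G d d').E} → L,
        labProb p (dup G d d') g * (dnum (relabel (dup G d d') g) : ℝ) := by
  classical
  set G' := dup G d d' with hG'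
  have hsub : G.E ⊆ G'.E := dupE_sub G d d' hd'
  have hVsub : G.V ⊆ G'.V := fun x hx => Finset.mem_insert_of_mem hx
  -- restriction of a labeling of `G'` to a labeling of `G`
  let res : ({e // e ∈ G'.E} → L) → ({e // e ∈ G.E} → L) :=
    fun s e => s ⟨e.1, hsub e.2⟩
  -- monotonicity of dnum under the duplication with matching labels
  have hkey : ∀ s : {e // e ∈ G'.E} → L,
      dnum (relabel G (res s)) ≤ dnum (relabel G' s) := by
    intro s
    refine dnum_le_dnum_s13 _ _ hVsub hsub ?_
    intro i j hij
    have hij' : (i, j) ∈ G.E := hij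
    show (if h : (i, j) ∈ G.E then res s ⟨(i, j), h⟩ else G.lab i j) =
      (if h : (i, j) ∈ G'.E then s ⟨(i, j), h⟩ else G'.lab i j)
    rw [dif_pos hij', dif_pos (hsub hij')]
  -- nonnegativity of labProb
  have hP0 : ∀ (H : LGraph α L) (f : {e // e ∈ H.E} → L), 0 ≤ labProb p H f :=
    fun H f => Finset.prod_nonneg (fun e _ => hp0 _)
  -- the equivalence splitting labelings of G' into labelings of G and of extra edges
  let Y := {x : {e // e ∈ G'.E} // x.1 ∉ G.E}
  let Φ : ({e // e ∈ G.E} → L) × (Y → L) → ({e // e ∈ G'.E} → L) :=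
    fun rt x => if h : x.1 ∈ G.E then rt.1 ⟨x.1, h⟩ else rt.2 ⟨x, h⟩
  have hres : ∀ rt, res (Φ rt) = rt.1 := by
    intro rt
    funext e
    show Φ rt ⟨e.1, hsub e.2⟩ = rt.1 e
    have : (⟨e.1, hsub e.2⟩ : {e // e ∈ G'.E}).1 ∈ G.E := e.2
    simp only [Φ, dif_pos this]
  have hbij : Function.Bijective Φ := by
    constructor
    · intro rt rt' h
      have h1 : rt.1 = rt'.1 := by rw [← hres rt, ← hres rt', h]
      have h2 : rt.2 = rt'.2 := by
        funext y
        have := congrFun h y.1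
        simpa only [Φ, dif_neg y.2] using this
      exact Prod.ext h1 h2
    · intro s
      refine ⟨(res s, fun y => s y.1), ?_⟩
      funext x
      dsimp only [Φ]
      split <;> rfl
  -- split labProb over the two parts
  have hsplit : ∀ rt : ({e // e ∈ G.E} → L) × (Y → L),
      labProb p G' (Φ rt) = labProb p G rt.1 * ∏ y : Y, p (rt.2 y) := by
    intro rt
    unfold labProb
    rw [← Fintype.prod_subtype_mul_prod_subtype (fun x : {e // e ∈ G'.E} => x.1 ∈ G.E)
      (fun x => p (Φ rt x))]
    congr 1
    · refine Fintype.prod_bijective (fun x : {x : {e // e ∈ G'.E} // x.1 ∈ G.E} =>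
        (⟨x.1.1, x.2⟩ : {e // e ∈ G.E})) ⟨?_, ?_⟩ _ _ ?_
      · intro x y h
        have h' : x.1.1 = y.1.1 := by simpa using h
        apply Subtype.ext
        apply Subtype.ext
        exact h'
      · intro e
        exact ⟨⟨⟨e.1, hsub e.2⟩, e.2⟩, rfl⟩
      · intro x
        show p (Φ rt x.1) = p (rt.1 ⟨x.1.1, x.2⟩)
        simp only [Φ, dif_pos x.2]
    · refine Fintype.prod_congr _ _ ?_
      intro y
      show p (Φ rt y.1) = p (rt.2 y)
      simp only [Φ, dif_neg y.2]
  -- sum over extra labelings is 1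
  have hone : ∑ t : Y → L, ∏ y : Y, p (t y) = 1 := by
    rw [← Fintype.prod_sum (fun (_ : Y) (j : L) => p j)]
    simp [hp1]
  calc ∑ f : {e // e ∈ G.E} → L, labProb p G f * (dnum (relabel G f) : ℝ)
      = (∑ t : Y → L, ∏ y : Y, p (t y)) *
          ∑ f : {e // e ∈ G.E} → L, labProb p G f * (dnum (relabel G f) : ℝ) := by
        rw [hone, one_mul]
    _ = ∑ rt : ({e // e ∈ G.E} → L) × (Y → L),
          labProb p G' (Φ rt) * (dnum (relabel G (res (Φ rt))) : ℝ) := by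
        rw [Fintype.sum_prod_type]
        simp only [hsplit, hres]
        rw [Finset.sum_mul_sum]
        rw [Finset.sum_comm]
        exact Finset.sum_congr rfl fun r _ => Finset.sum_congr rfl fun t _ => by ring
    _ = ∑ s : {e // e ∈ G'.E} → L,
          labProb p G' s * (dnum (relabel G (res s)) : ℝ) :=
        Fintype.sum_bijective Φ hbij _ _ (fun rt => rfl)
    _ ≤ ∑ s : {e // e ∈ G'.E} → L,
          labProb p G' s * (dnum (relabel G' s) : ℝ) := by
        refine Finset.sum_le_sum fun s _ => ?_
        exact mul_le_mul_of_nonneg_left (Nat.cast_le.mpr (hkey s)) (hP0 G' s)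

end GeneDup
end

section
/- Let G = (V, E, ℓ) be an edge-labeled directed graph with finite label set L, let d ∈ V have at least one neighbor (some k with (d,k) ∈ E or (k,d) ∈ E), and let G' = (V', E', ℓ') = 𝒟_d(G). Fix a probability function p : L → [0,1] with Σ_{a∈L} p(a) = 1 and with at least two labels a ≠ b satisfying p(a) > 0 and p(b) > 0. With P(G_r) = Π_{e∈E} p(ℓ_r(e)) for labelings ℓ_r : E → L and P(G'_s) = Π_{e∈E'} p(ℓ'_s(e)) for labelings ℓ'_s : E' → L, the inequality is strict: Σ_r P(G_r) 𝙳(G_r) < Σ_s P(G'_s) 𝙳(G'_s). -/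
/-!
Split a labeling of the edges of `𝒟_d(G)` into its restriction to the old edges `E` and its
values on the new edges at `d'`. Under the product distribution the restriction is again
distributed by the product distribution on `E`, so the left-hand side is the expectation over
labelings `g` of `𝒟_d(G)` of `𝙳` of `G` labeled by `g|_E`. Since `G` with that labeling is a
subgraph of `𝒟_d(G)` labeled by `g`, this is pointwise at most `𝙳` of `𝒟_d(G)` labeled by `g`.
The inequality is strict at the labeling that puts `a` on every old edge and `b` on every
new one: the old edges then leave no pair distinguishable, so `𝙳 ≤ 1`, while a neighbor `k` of
`d` distinguishes `d` from `d'`, so `𝙳 ≥ 2`; this labeling has positive probability.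
-/

namespace GeneDup

variable {α L : Type*}

open Finset Function

section ProductDistribution

variable {ι κ : Type*} [Fintype ι] [DecidableEq ι] [Fintype L] {p : L → ℝ}

theorem sum_pi_prod_eq_one (hp1 : ∑ a, p a = 1) : ∑ g : ι → L, ∏ i, p (g i) = 1 := by
  rw [← Fintype.prod_sum fun _ a => p a]
  simp [hp1]

theorem sum_prod_mul_restrict_subtype (hp1 : ∑ a, p a = 1) (q : ι → Prop) [DecidablePred q]
    (F : ({i // q i} → L) → ℝ) :
    ∑ g : ι → L, (∏ i, p (g i)) * F (fun i => g i) =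
      ∑ f : {i // q i} → L, (∏ i, p (f i)) * F f := by
  rw [← (Equiv.piEquivPiSubtypeProd q fun _ => L).symm.sum_comp, Fintype.sum_prod_type]
  refine Fintype.sum_congr _ _ fun f => ?_
  have hneg (x : {x // ¬ q x}) : ¬ q x := x.2
  simp only [Equiv.piEquivPiSubtypeProd_symm_apply, ← Fintype.prod_subtype_mul_prod_subtype q,
    Subtype.prop, dif_pos, Subtype.coe_eta, hneg, dite_false]
  rw [← Finset.sum_mul, ← Finset.mul_sum, sum_pi_prod_eq_one hp1, mul_one]

theorem sum_prod_mul_comp_of_injective [Fintype κ] [DecidableEq κ] (hp1 : ∑ a, p a = 1)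
    {φ : κ → ι} (hφ : Injective φ) (F : (κ → L) → ℝ) :
    ∑ g : ι → L, (∏ i, p (g i)) * F (g ∘ φ) = ∑ f : κ → L, (∏ k, p (f k)) * F f := by
  classical
  let e := Equiv.ofInjective φ hφ
  refine (sum_prod_mul_restrict_subtype hp1 (· ∈ Set.range φ) fun f => F (f ∘ e)).trans ?_
  convert Fintype.sum_equiv (e.arrowCongr (Equiv.refl L)).symm
    (fun f => (∏ i, p (f i)) * F (f ∘ e)) (fun f => (∏ k, p (f k)) * F f) fun f => ?_
  rw [← e.prod_comp]
  rfl

end ProductDistribution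

theorem Distinguishable.symm {G : LGraph α L} {i j : α} (h : Distinguishable G i j) :
    Distinguishable G j i := by
  obtain ⟨k, ⟨hi, hj, hne⟩ | ⟨hi, hj, hne⟩⟩ := h
  exacts [⟨k, .inl ⟨hj, hi, hne.symm⟩⟩, ⟨k, .inr ⟨hj, hi, hne.symm⟩⟩]

theorem bddAbove_card_isDistSet (G : LGraph α L) :
    BddAbove {n | ∃ U : Finset α, IsDistSet G U ∧ U.card = n} :=
  ⟨G.V.card, by rintro n ⟨U, hU, rfl⟩; exact card_le_card (coe_subset.mp hU.1)⟩

theorem le_dnum {G : LGraph α L} {U : Finset α} (hU : IsDistSet G U) : U.card ≤ dnum G :=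
  le_csSup (bddAbove_card_isDistSet G) ⟨U, hU, rfl⟩

theorem exists_isDistSet_card_eq_dnum (G : LGraph α L) :
    ∃ U : Finset α, IsDistSet G U ∧ U.card = dnum G :=
  Nat.sSup_mem (s := {n | ∃ U : Finset α, IsDistSet G U ∧ U.card = n})
    ⟨0, ∅, by simp [IsDistSet]⟩ (bddAbove_card_isDistSet G)

theorem dnum_le_of_isSubgraph {H G : LGraph α L} (h : IsSubgraph H G) : dnum H ≤ dnum G := by
  obtain ⟨hV, hE, hlab⟩ := h
  obtain ⟨U, ⟨hUV, hU⟩, hcard⟩ := exists_isDistSet_card_eq_dnum H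
  refine hcard ▸ le_dnum ⟨hUV.trans (coe_subset.mpr hV), fun i hi j hj hij => ?_⟩
  obtain ⟨k, ⟨h₁, h₂, hne⟩ | ⟨h₁, h₂, hne⟩⟩ := hU i hi j hj hij
  · exact ⟨k, .inl ⟨hE h₁, hE h₂, hlab _ h₁ ▸ hlab _ h₂ ▸ hne⟩⟩
  · exact ⟨k, .inr ⟨hE h₁, hE h₂, hlab _ h₁ ▸ hlab _ h₂ ▸ hne⟩⟩

theorem dnum_le_one_of_forall_not_distinguishable {G : LGraph α L}
    (h : ∀ i j, ¬ Distinguishable G i j) : dnum G ≤ 1 := by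
  obtain ⟨U, ⟨-, hU⟩, hcard⟩ := exists_isDistSet_card_eq_dnum G
  rw [← hcard, card_le_one]
  intro i hi j hj
  by_contra hij
  exact h i j (hU i hi j hj hij)

theorem two_le_dnum {G : LGraph α L} {i j : α} (hi : i ∈ G.V) (hj : j ∈ G.V) (hij : i ≠ j)
    (h : Distinguishable G i j) : 2 ≤ dnum G := by
  classical
  refine card_pair hij ▸ le_dnum ⟨by simp [Set.insert_subset_iff, hi, hj], ?_⟩
  simp only [coe_insert, coe_singleton, Set.mem_insert_iff, Set.mem_singleton_iff]
  rintro x (rfl | rfl) y (rfl | rfl) hxy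
  exacts [absurd rfl hxy, h, h.symm, absurd rfl hxy]

section Relabel

variable [DecidableEq α]

theorem relabel_lab_of_mem (G : LGraph α L) (f : {e // e ∈ G.E} → L) {i j : α}
    (h : (i, j) ∈ G.E) : (relabel G f).lab i j = f ⟨(i, j), h⟩ :=
  dif_pos h

theorem not_distinguishable_relabel_const (G : LGraph α L) (a : L) (i j : α) :
    ¬ Distinguishable (relabel G fun _ => a) i j := by
  rintro ⟨k, ⟨h₁, h₂, hne⟩ | ⟨h₁, h₂, hne⟩⟩ <;>
    exact hne (by rw [relabel_lab_of_mem G _ h₁, relabel_lab_of_mem G _ h₂])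

theorem isSubgraph_relabel {H G : LGraph α L} (hV : H.V ⊆ G.V) (hE : H.E ⊆ G.E)
    (g : {e // e ∈ G.E} → L) :
    IsSubgraph (relabel H fun e => g ⟨e, hE e.2⟩) (relabel G g) :=
  ⟨hV, hE, fun e he => by
    rw [relabel_lab_of_mem H _ he, relabel_lab_of_mem G _ (hE he)]⟩

theorem subset_dup_E {G : LGraph α L} (d : α) {d' : α} (hd' : d' ∉ G.V) :
    G.E ⊆ (dup G d d').E := by
  intro e he
  obtain ⟨h₁, h₂⟩ := G.edge_mem e he
  have n₁ : e.1 ≠ d' := ne_of_mem_of_not_mem h₁ hd'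
  have n₂ : e.2 ≠ d' := ne_of_mem_of_not_mem h₂ hd'
  simp [dup, n₁, n₂, h₁, h₂, he]

theorem mem_dup_E_of_mem_left {G : LGraph α L} {d d' k : α} (hd' : d' ∉ G.V)
    (hk : (d, k) ∈ G.E) : (d', k) ∈ (dup G d d').E := by
  have hkV : k ∈ G.V := (G.edge_mem _ hk).2
  simp [dup, ne_of_mem_of_not_mem hkV hd', hkV, hk]

theorem mem_dup_E_of_mem_right {G : LGraph α L} {d d' k : α} (hd' : d' ∉ G.V)
    (hk : (k, d) ∈ G.E) : (k, d') ∈ (dup G d d').E := by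
  have hkV : k ∈ G.V := (G.edge_mem _ hk).1
  simp [dup, ne_of_mem_of_not_mem hkV hd', hkV, hk]

theorem distinguishable_relabel_dup {G : LGraph α L} {d d' : α} (hd' : d' ∉ G.V)
    (hnbr : ∃ k, (d, k) ∈ G.E ∨ (k, d) ∈ G.E) {a b : L} (hab : a ≠ b) :
    Distinguishable (relabel (dup G d d') fun e => if e.1 ∈ G.E then a else b) d d' := by
  obtain ⟨k, hk | hk⟩ := hnbr
  · have hnew : (d', k) ∉ G.E := fun h => hd' (G.edge_mem _ h).1
    refine ⟨k, .inl ⟨subset_dup_E d hd' hk, mem_dup_E_of_mem_left hd' hk, ?_⟩⟩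
    rw [relabel_lab_of_mem (dup G d d') _ (subset_dup_E d hd' hk),
      relabel_lab_of_mem (dup G d d') _ (mem_dup_E_of_mem_left hd' hk)]
    simpa [hk, hnew] using hab
  · have hnew : (k, d') ∉ G.E := fun h => hd' (G.edge_mem _ h).2
    refine ⟨k, .inr ⟨subset_dup_E d hd' hk, mem_dup_E_of_mem_right hd' hk, ?_⟩⟩
    rw [relabel_lab_of_mem (dup G d d') _ (subset_dup_E d hd' hk),
      relabel_lab_of_mem (dup G d d') _ (mem_dup_E_of_mem_right hd' hk)]
    simpa [hk, hnew] using hab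

end Relabel

theorem labProb_nonneg {p : L → ℝ} (hp0 : ∀ a, 0 ≤ p a) (G : LGraph α L)
    (f : {e // e ∈ G.E} → L) : 0 ≤ labProb p G f :=
  prod_nonneg fun _ _ => hp0 _

theorem labProb_pos {p : L → ℝ} {G : LGraph α L} {f : {e // e ∈ G.E} → L}
    (h : ∀ e, 0 < p (f e)) : 0 < labProb p G f :=
  prod_pos fun e _ => h e

theorem stmt14_general [DecidableEq α] [Fintype L] (G : LGraph α L) (d d' : α)
    (hd' : d' ∉ G.V)
    (hnbr : ∃ k, (d, k) ∈ G.E ∨ (k, d) ∈ G.E)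
    (p : L → ℝ) (hp0 : ∀ a, 0 ≤ p a) (hp1 : ∑ a, p a = 1)
    (a b : L) (hab : a ≠ b) (hpa : 0 < p a) (hpb : 0 < p b) :
    ∑ f : {e // e ∈ G.E} → L, labProb p G f * (dnum (relabel G f) : ℝ) <
      ∑ g : {e // e ∈ (dup G d d').E} → L,
        labProb p (dup G d d') g * (dnum (relabel (dup G d d') g) : ℝ) := by
  set G' := dup G d d'
  have hE : G.E ⊆ G'.E := subset_dup_E d hd'
  let incl : {e // e ∈ G.E} → {e // e ∈ G'.E} := fun e => ⟨e, hE e.2⟩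
  have hincl : Injective incl := fun _ _ h => Subtype.ext (Subtype.mk.inj h)
  let g₀ : {e // e ∈ G'.E} → L := fun e => if e.1 ∈ G.E then a else b
  have hdV : d ∈ G.V := by
    obtain ⟨k, hk | hk⟩ := hnbr
    exacts [(G.edge_mem _ hk).1, (G.edge_mem _ hk).2]
  have hg₀_dnum : dnum (relabel G (g₀ ∘ incl)) < dnum (relabel G' g₀) := by
    have hconst : g₀ ∘ incl = fun _ => a := funext fun e => if_pos e.2
    have hle : dnum (relabel G (g₀ ∘ incl)) ≤ 1 := hconst ▸
      dnum_le_one_of_forall_not_distinguishable (not_distinguishable_relabel_const G a)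
    exact hle.trans_lt (two_le_dnum (mem_insert_of_mem hdV) (mem_insert_self d' G.V)
      (ne_of_mem_of_not_mem hdV hd') (distinguishable_relabel_dup hd' hnbr hab))
  have hg₀_pos : 0 < labProb p G' g₀ := labProb_pos fun e => by
    dsimp only [g₀]; split_ifs <;> assumption
  calc ∑ f, labProb p G f * (dnum (relabel G f) : ℝ)
      = ∑ g, labProb p G' g * (dnum (relabel G (g ∘ incl)) : ℝ) :=
        (sum_prod_mul_comp_of_injective hp1 hincl fun f => (dnum (relabel G f) : ℝ)).symm
    _ < ∑ g, labProb p G' g * (dnum (relabel G' g) : ℝ) := by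
      refine sum_lt_sum (fun g _ => ?_) ⟨g₀, mem_univ _, ?_⟩
      · exact mul_le_mul_of_nonneg_left
          (mod_cast dnum_le_of_isSubgraph (isSubgraph_relabel (subset_insert d' G.V) hE g))
          (labProb_nonneg hp0 G' g)
      · exact mul_lt_mul_of_pos_left (mod_cast hg₀_dnum) hg₀_pos

/-- if `d` has at least one neighbor, the fixed-distribution expected
distinguishability strictly increases under duplication of `d`:
`∑_r P(G_r) 𝙳(G_r) < ∑_s P(G'_s) 𝙳(G'_s)` where `G' = 𝒟_d(G)`. -/
theorem stmt14 [DecidableEq α] [Fintype L] (G : LGraph α L) (d d' : α)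
    (hd : d ∈ G.V) (hd' : d' ∉ G.V)
    (hnbr : ∃ k, (d, k) ∈ G.E ∨ (k, d) ∈ G.E)
    (p : L → ℝ) (hp0 : ∀ a, 0 ≤ p a) (hp1 : ∑ a, p a = 1)
    (a b : L) (hab : a ≠ b) (hpa : 0 < p a) (hpb : 0 < p b) :
    ∑ f : {e // e ∈ G.E} → L, labProb p G f * (dnum (relabel G f) : ℝ) <
      ∑ g : {e // e ∈ (dup G d d').E} → L,
        labProb p (dup G d d') g * (dnum (relabel (dup G d d') g) : ℝ) :=
  stmt14_general G d d' hd' hnbr p hp0 hp1 a b hab hpa hpb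

end GeneDup
end

section
/- Let G = (V, E) be a finite simple undirected graph. Define the edge-labeled undirected graph H on vertex set V ⊔ E with label set L = V as follows: for each edge e = {i,j} ∈ E, H has edges between i and e and between j and e (in both directions), labeled ℓ(i,e) = ℓ(e,i) = i and ℓ(j,e) = ℓ(e,j) = j; H has no other edges. Then: (a) two vertices i, j ∈ V are distinguishable in H if and only if {i,j} ∈ E; (b) no vertex in V is distinguishable in H from any vertex in E; and (c) no two vertices in E are distinguishable in H. -/
namespace GeneDup

variable {α L : Type*}

/-- The edge-labeled (undirected, i.e. symmetric) graph `H` on vertex set `V ⊔ E`,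
with label set `V`, built from a finite simple graph `G = (V, E)`: for each edge
`e = {i,j}` of `G`, `H` has the edges between `i` and `e` and between `j` and `e`
(in both directions), labeled `ℓ(i,e) = ℓ(e,i) = i` and `ℓ(j,e) = ℓ(e,j) = j`,
and no other edges. -/
noncomputable def inciGraph {α : Type*} [Fintype α] [DecidableEq α]
    (G : SimpleGraph α) [DecidableRel G.Adj] : LGraph (α ⊕ Sym2 α) α where
  V := (Finset.univ.image Sum.inl) ∪ (G.edgeFinset.image Sum.inr)
  E := Finset.univ.filter
    (fun e : (α ⊕ Sym2 α) × (α ⊕ Sym2 α) =>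
      (∃ i s, e = (Sum.inl i, Sum.inr s) ∧ s ∈ G.edgeFinset ∧ i ∈ s) ∨
      (∃ i s, e = (Sum.inr s, Sum.inl i) ∧ s ∈ G.edgeFinset ∧ i ∈ s))
  edge_mem := by
    intro e he
    rw [Finset.mem_filter] at he
    rcases he.2 with ⟨i, s, rfl, hs, hi⟩ | ⟨i, s, rfl, hs, hi⟩
    · exact ⟨Finset.mem_union_left _ (Finset.mem_image_of_mem _ (Finset.mem_univ i)),
        Finset.mem_union_right _ (Finset.mem_image_of_mem _ hs)⟩
    · exact ⟨Finset.mem_union_right _ (Finset.mem_image_of_mem _ hs),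
        Finset.mem_union_left _ (Finset.mem_image_of_mem _ (Finset.mem_univ i))⟩
  lab := fun x y =>
    match x, y with
    | Sum.inl i, _ => i
    | Sum.inr _, Sum.inl i => i
    | Sum.inr s, Sum.inr _ => s.out.1

/-- in the graph `H = inciGraph G`:
(a) `i, j ∈ V` are distinguishable in `H` iff `{i,j}` is an edge of `G`;
(b) no vertex of `V` is distinguishable in `H` from any vertex of `E`;
(c) no two vertices of `E` are distinguishable in `H`. -/
theorem stmt15 {α : Type*} [Fintype α] [DecidableEq α]
    (G : SimpleGraph α) [DecidableRel G.Adj] :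
    (∀ i j : α,
        Distinguishable (inciGraph G) (Sum.inl i) (Sum.inl j) ↔ G.Adj i j) ∧
      (∀ (i : α) (s : Sym2 α), s ∈ G.edgeSet →
        ¬ Distinguishable (inciGraph G) (Sum.inl i) (Sum.inr s)) ∧
      (∀ s t : Sym2 α, s ∈ G.edgeSet → t ∈ G.edgeSet →
        ¬ Distinguishable (inciGraph G) (Sum.inr s) (Sum.inr t)) := by
  have hmem : ∀ x y : α ⊕ Sym2 α, (x, y) ∈ (inciGraph G).E ↔
      ((∃ i s, (x, y) = (Sum.inl i, Sum.inr s) ∧ s ∈ G.edgeFinset ∧ i ∈ s) ∨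
       (∃ i s, (x, y) = (Sum.inr s, Sum.inl i) ∧ s ∈ G.edgeFinset ∧ i ∈ s)) := by
    intro x y
    simp [inciGraph]
  refine ⟨?_, ?_, ?_⟩
  · intro i j
    constructor
    · rintro ⟨k, hk⟩
      rcases hk with ⟨h1, h2, hne⟩ | ⟨h1, h2, hne⟩
      · rw [hmem] at h1 h2
        rcases h1 with ⟨i', s, heq, hs, hi⟩ | ⟨i', s, heq, hs, hi⟩
        · cases heq
          rcases h2 with ⟨j', t, heq2, ht, hj⟩ | ⟨j', t, heq2, ht, hj⟩
          · cases heq2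
            have hij : i ≠ j := by
              intro h; apply hne; simp [inciGraph, h]
            rw [SimpleGraph.mem_edgeFinset] at hs
            have := Sym2.mem_and_mem_iff hij |>.mp ⟨hi, hj⟩
            rw [this] at hs
            rwa [SimpleGraph.mem_edgeSet] at hs
          · cases heq2
        · cases heq
      · rw [hmem] at h1 h2
        rcases h1 with ⟨i', s, heq, hs, hi⟩ | ⟨i', s, heq, hs, hi⟩
        · cases heq
        · cases heq
          rcases h2 with ⟨j', t, heq2, ht, hj⟩ | ⟨j', t, heq2, ht, hj⟩
          · cases heq2
          · cases heq2
            have hij : i ≠ j := by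
              intro h; apply hne; simp [inciGraph, h]
            rw [SimpleGraph.mem_edgeFinset] at hs
            have := Sym2.mem_and_mem_iff hij |>.mp ⟨hi, hj⟩
            rw [this] at hs
            rwa [SimpleGraph.mem_edgeSet] at hs
    · intro hadj
      refine ⟨Sum.inr s(i, j), Or.inl ⟨?_, ?_, ?_⟩⟩
      · rw [hmem]
        exact Or.inl ⟨i, s(i, j), rfl, SimpleGraph.mem_edgeFinset.mpr hadj,
          Sym2.mem_mk_left i j⟩
      · rw [hmem]
        exact Or.inl ⟨j, s(i, j), rfl, SimpleGraph.mem_edgeFinset.mpr hadj,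
          Sym2.mem_mk_right i j⟩
      · simpa [inciGraph] using hadj.ne
  · rintro i s _ ⟨k, hk⟩
    rcases hk with ⟨h1, h2, _⟩ | ⟨h1, h2, _⟩
    · rw [hmem] at h1 h2
      rcases h1 with ⟨i', t, heq, _, _⟩ | ⟨i', t, heq, _, _⟩ <;> cases heq <;>
        rcases h2 with ⟨j', u, heq2, _, _⟩ | ⟨j', u, heq2, _, _⟩ <;> cases heq2
    · rw [hmem] at h1 h2
      rcases h1 with ⟨i', t, heq, _, _⟩ | ⟨i', t, heq, _, _⟩ <;> cases heq <;>
        rcases h2 with ⟨j', u, heq2, _, _⟩ | ⟨j', u, heq2, _, _⟩ <;> cases heq2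
  · rintro s t _ _ ⟨k, hk⟩
    rcases hk with ⟨h1, h2, hne⟩ | ⟨h1, h2, hne⟩
    · rw [hmem] at h1 h2
      rcases h1 with ⟨i', u, heq, _, _⟩ | ⟨i', u, heq, _, _⟩ <;> cases heq
      rcases h2 with ⟨j', w, heq2, _, _⟩ | ⟨j', w, heq2, _, _⟩ <;> cases heq2
      exact hne rfl
    · rw [hmem] at h1 h2
      rcases h1 with ⟨i', u, heq, _, _⟩ | ⟨i', u, heq, _, _⟩ <;> cases heq
      rcases h2 with ⟨j', w, heq2, _, _⟩ | ⟨j', w, heq2, _, _⟩ <;> cases heq2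
      exact hne rfl

end GeneDup
end

section
/- Let G = (V, E) be a finite simple undirected graph and let H be the edge-labeled undirected graph on vertex set V ⊔ E with label set L = V in which, for each edge e = {i,j} ∈ E, H has edges between i and e and between j and e labeled ℓ(i,e) = ℓ(e,i) = i and ℓ(j,e) = ℓ(e,j) = j, and no other edges. Then for every m ∈ ℕ, H has a distinguishable set of size m if and only if G has an m-clique; consequently the distinguishability 𝙳(H) equals the clique number of G. -/
namespace GeneDup

variable {α L : Type*}

lemma mem_inciE {α : Type*} [Fintype α] [DecidableEq α]
    (G : SimpleGraph α) [DecidableRel G.Adj] (x y : α ⊕ Sym2 α) :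
    (x, y) ∈ (inciGraph G).E ↔
      (∃ i s, x = Sum.inl i ∧ y = Sum.inr s ∧ s ∈ G.edgeFinset ∧ i ∈ s) ∨
      (∃ i s, x = Sum.inr s ∧ y = Sum.inl i ∧ s ∈ G.edgeFinset ∧ i ∈ s) := by
  simp only [inciGraph, Finset.mem_filter, Finset.mem_univ, true_and, Prod.ext_iff,
    SimpleGraph.mem_edgeFinset, and_assoc]

lemma lab_inl {α : Type*} [Fintype α] [DecidableEq α]
    (G : SimpleGraph α) [DecidableRel G.Adj] (i : α) (y : α ⊕ Sym2 α) :
    (inciGraph G).lab (Sum.inl i) y = i := rfl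

lemma lab_inr_inl {α : Type*} [Fintype α] [DecidableEq α]
    (G : SimpleGraph α) [DecidableRel G.Adj] (s : Sym2 α) (i : α) :
    (inciGraph G).lab (Sum.inr s) (Sum.inl i) = i := rfl

lemma noDist_inr {α : Type*} [Fintype α] [DecidableEq α]
    (G : SimpleGraph α) [DecidableRel G.Adj] (s : Sym2 α) (v : α ⊕ Sym2 α) :
    ¬ Distinguishable (inciGraph G) (Sum.inr s) v := by
  rintro ⟨k, hk⟩
  rcases hk with ⟨h1, h2, hlab⟩ | ⟨h1, h2, hlab⟩
  · rcases (mem_inciE G _ _).mp h1 with ⟨i, t, h, _, _, _⟩ | ⟨i, t, _, rfl, _, _⟩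
    · exact absurd h (by simp)
    · -- k = Sum.inl i
      rcases (mem_inciE G _ _).mp h2 with ⟨j, u, _, h, _, _⟩ | ⟨j, u, rfl, _, _, _⟩
      · exact absurd h (by simp)
      · exact hlab (by rw [lab_inr_inl, lab_inr_inl])
  · rcases (mem_inciE G _ _).mp h1 with ⟨i, t, rfl, _, _, _⟩ | ⟨i, t, _, h, _, _⟩
    · exact hlab (by rw [lab_inl, lab_inl])
    · exact absurd h (by simp)

lemma adj_of_dist {α : Type*} [Fintype α] [DecidableEq α]
    (G : SimpleGraph α) [DecidableRel G.Adj] {i j : α} (hij : i ≠ j)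
    (h : Distinguishable (inciGraph G) (Sum.inl i) (Sum.inl j)) : G.Adj i j := by
  obtain ⟨k, hk⟩ := h
  rcases hk with ⟨h1, h2, _⟩ | ⟨h1, h2, _⟩
  · rcases (mem_inciE G _ _).mp h1 with ⟨i', s, hi', rfl, hs, hmem⟩ | ⟨_, _, h, _⟩
    · obtain rfl : i = i' := by simpa using hi'
      rcases (mem_inciE G _ _).mp h2 with ⟨j', t, hj', ht, hts, hmem'⟩ | ⟨_, _, h, _⟩
      · obtain rfl : j = j' := by simpa using hj'
        obtain rfl : s = t := by simpa using ht
        obtain rfl : s = s(i, j) := (Sym2.mem_and_mem_iff hij).mp ⟨hmem, hmem'⟩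
        exact G.mem_edgeSet.mp (SimpleGraph.mem_edgeFinset.mp hs)
      · exact absurd h (by simp)
    · exact absurd h (by simp)
  · rcases (mem_inciE G _ _).mp h1 with ⟨_, _, _, h, _⟩ | ⟨i', s, rfl, hi', hs, hmem⟩
    · exact absurd h (by simp)
    · obtain rfl : i = i' := by simpa using hi'
      rcases (mem_inciE G _ _).mp h2 with ⟨_, _, _, h, _⟩ | ⟨j', t, ht, hj', hts, hmem'⟩
      · exact absurd h (by simp)
      · obtain rfl : j = j' := by simpa using hj'
        obtain rfl : s = t := by simpa using ht
        obtain rfl : s = s(i, j) := (Sym2.mem_and_mem_iff hij).mp ⟨hmem, hmem'⟩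
        exact G.mem_edgeSet.mp (SimpleGraph.mem_edgeFinset.mp hs)

lemma dist_of_adj {α : Type*} [Fintype α] [DecidableEq α]
    (G : SimpleGraph α) [DecidableRel G.Adj] {i j : α} (h : G.Adj i j) :
    Distinguishable (inciGraph G) (Sum.inl i) (Sum.inl j) := by
  refine ⟨Sum.inr s(i, j), Or.inl ⟨?_, ?_, ?_⟩⟩
  · exact (mem_inciE G _ _).mpr (Or.inl ⟨i, s(i, j), rfl, rfl,
      SimpleGraph.mem_edgeFinset.mpr (G.mem_edgeSet.mpr h), by simp⟩)
  · exact (mem_inciE G _ _).mpr (Or.inl ⟨j, s(i, j), rfl, rfl,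
      SimpleGraph.mem_edgeFinset.mpr (G.mem_edgeSet.mpr h), by simp⟩)
  · simpa [lab_inl] using h.ne

/-- for every `m`, the graph `H = inciGraph G` has a distinguishable
set of size `m` iff `G` has an `m`-clique; consequently the distinguishability of
`H` equals the clique number of `G`. -/
theorem stmt16 {α : Type*} [Fintype α] [DecidableEq α]
    (G : SimpleGraph α) [DecidableRel G.Adj] :
    (∀ m : ℕ,
      (∃ U : Finset (α ⊕ Sym2 α), IsDistSet (inciGraph G) (↑U) ∧ U.card = m) ↔
        ∃ U : Finset α, G.IsNClique m U) ∧
      dnum (inciGraph G) = G.cliqueNum := by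
  classical
  have main : ∀ m : ℕ,
      (∃ U : Finset (α ⊕ Sym2 α), IsDistSet (inciGraph G) (↑U) ∧ U.card = m) ↔
        ∃ U : Finset α, G.IsNClique m U := by
    intro m
    constructor
    · rintro ⟨U, ⟨hUV, hUd⟩, rfl⟩
      by_cases hall : ∀ x ∈ U, ∃ i, x = Sum.inl i
      · set W : Finset α := Finset.univ.filter (fun i => Sum.inl i ∈ U) with hW
        have hUW : U = W.image Sum.inl := by
          ext x
          constructor
          · intro hx
            obtain ⟨i, rfl⟩ := hall x hx
            exact Finset.mem_image_of_mem _ (by simp [hW, hx])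
          · intro hx
            obtain ⟨i, hi, rfl⟩ := Finset.mem_image.mp hx
            simpa [hW] using hi
        refine ⟨W, ?_, ?_⟩
        · intro i hi j hj hij
          exact adj_of_dist G hij
            (hUd _ (by rw [hUW]; exact_mod_cast Finset.mem_image_of_mem _ hi)
                   _ (by rw [hUW]; exact_mod_cast Finset.mem_image_of_mem _ hj)
                   (by simp [hij]))
        · rw [hUW, Finset.card_image_of_injective _ Sum.inl_injective]
      · push_neg at hall
        obtain ⟨x, hx, hxl⟩ := hall
        obtain ⟨s, rfl⟩ : ∃ s, x = Sum.inr s := by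
          cases x with
          | inl i => exact absurd rfl (hxl i)
          | inr s => exact ⟨s, rfl⟩
        have hUsing : U = {Sum.inr s} := by
          apply Finset.eq_singleton_iff_unique_mem.mpr
          refine ⟨hx, fun y hy => ?_⟩
          by_contra hne
          exact noDist_inr G s y (hUd _ hx _ hy (Ne.symm hne))
        have hm : U.card = 1 := by rw [hUsing]; simp
        have hsE : s ∈ G.edgeFinset := by
          have := hUV (by exact_mod_cast hx)
          simp only [inciGraph, Finset.coe_union, Finset.coe_image, Set.mem_union] at this
          rcases this with h | h
          · obtain ⟨i, _, h⟩ := h; exact absurd h (by simp)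
          · obtain ⟨t, ht, h⟩ := h
            obtain rfl : t = s := by simpa using h
            exact_mod_cast ht
        rw [hm]
        induction s using Sym2.ind with
        | _ a b =>
          exact ⟨{a}, by simp [SimpleGraph.isNClique_iff, SimpleGraph.IsClique]⟩
    · rintro ⟨W, hW⟩
      refine ⟨W.image Sum.inl, ⟨?_, ?_⟩, ?_⟩
      · intro x hx
        simp only [Finset.coe_image, Set.mem_image] at hx
        obtain ⟨i, _, rfl⟩ := hx
        simp [inciGraph]
      · intro x hx y hy hxy
        simp only [Finset.coe_image, Set.mem_image, Finset.mem_coe] at hx hy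
        obtain ⟨i, hi, rfl⟩ := hx
        obtain ⟨j, hj, rfl⟩ := hy
        exact dist_of_adj G (hW.1 hi hj (by simpa using hxy))
      · rw [Finset.card_image_of_injective _ Sum.inl_injective]
        exact hW.2
  refine ⟨main, ?_⟩
  unfold dnum SimpleGraph.cliqueNum
  congr 1
  ext n
  exact main n

end GeneDup
end
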